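/- arXiv:2410.16893 — 2 statements merged into one kernel-verified Lean document; each statement's English description precedes it below -/
import Mathlib

section
/- Let X be a set, f, μ, σ : X → ℝ with σ ≥ 0, and β ≥ 0. Suppose |f(x) − μ(x)| ≤ √β·σ(x) for all x ∈ X. If x_t minimizes the LCB, i.e., μ(x_t) − √β·σ(x_t) ≤ μ(x) − √β·σ(x) for all x ∈ X, then for every x* ∈ X the instantaneous regret satisfies f(x_t) − f(x*) ≤ 2√β·σ(x_t). -/
theorem lcb_regret_bound (X : Type*) (f μ σ : X → ℝ) (β : ℝ) (hβ : 0 ≤ β)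
    (hσ : ∀ x, 0 ≤ σ x)
    (hconf : ∀ x, |f x - μ x| ≤ Real.sqrt β * σ x)
    (xt : X) (hxt : ∀ x, μ xt - Real.sqrt β * σ xt ≤ μ x - Real.sqrt β * σ x) :
    ∀ xstar : X, f xt - f xstar ≤ 2 * Real.sqrt β * σ xt := by
  intro xstar
  have h1 := abs_le.mp (hconf xt)
  have h2 := abs_le.mp (hconf xstar)
  have h3 := hxt xstar
  nlinarith [Real.sqrt_nonneg β, hσ xstar]
end

section
/- Let 0 = R₀ < R₁ < ⋯ < R_M and let k : ℝ → ℝ. Suppose w₀, …, w_M ≥ 0 with Σⱼ wⱼ = 1, and there exist binary indicators λ₁, …, λ_M ∈ {0,1} with Σⱼ λⱼ = 1, w₀ ≤ λ₁, wⱼ ≤ λⱼ + λⱼ₊₁ for 1 ≤ j < M, and w_M ≤ λ_M. Define r = Σⱼ wⱼRⱼ and v = Σⱼ wⱼ·k(Rⱼ). Then there exists an index 1 ≤ j ≤ M such that r ∈ [Rⱼ₋₁, Rⱼ] and v equals the value at r of the linear interpolant of k between (Rⱼ₋₁, k(Rⱼ₋₁)) and (Rⱼ, k(Rⱼ)). 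-/
/-!
The binary `lam` selects a single segment `j`; the adjacency constraints then force every weight
other than `w (j - 1)` and `w j` to vanish. So `(r, v)` is a convex combination of the two
breakpoints `(R (j - 1), k (R (j - 1)))` and `(R j, k (R j))`, i.e. a point of the chord over
segment `j`.
-/

open Finset

lemma exists_eq_one_of_sum_eq_one {ι R : Type*} [AddCommMonoidWithOne R] [CharZero R]
    {s : Finset ι} {f : ι → R} (hf : ∀ i ∈ s, f i = 0 ∨ f i = 1) (hsum : ∑ i ∈ s, f i = 1) :
    ∃ j ∈ s, ∀ i ∈ s, i ≠ j → f i = 0 := by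
  classical
  have hcard : #(s.filter (f · = 1)) = 1 := by
    have : ∑ i ∈ s, f i = ∑ i ∈ s, if f i = 1 then (1 : R) else 0 :=
      sum_congr rfl fun i hi => by rcases hf i hi with h | h <;> simp [h]
    rwa [this, sum_boole, Nat.cast_eq_one] at hsum
  obtain ⟨j, hj⟩ := card_eq_one.1 hcard
  have hjs : j ∈ s.filter (f · = 1) := hj ▸ mem_singleton_self j
  refine ⟨j, (mem_filter.1 hjs).1, fun i hi hij => (hf i hi).resolve_right fun h1 => hij ?_⟩
  exact mem_singleton.1 (hj ▸ mem_filter.2 ⟨hi, h1⟩)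

section

variable {𝕜 : Type*} [Field 𝕜] [LinearOrder 𝕜] [IsStrictOrderedRing 𝕜]

lemma sos2_weight_eq_zero {M j i : ℕ} {w lam : ℕ → 𝕜} (hj : 1 ≤ j) (hjM : j ≤ M)
    (hlam : ∀ i, 1 ≤ i → i ≤ M → i ≠ j → lam i = 0) (hwi : 0 ≤ w i)
    (h0 : w 0 ≤ lam 1) (hmid : ∀ j, 1 ≤ j → j < M → w j ≤ lam j + lam (j + 1))
    (hlast : w M ≤ lam M) (hiM : i ≤ M) (hi_pred : i ≠ j - 1) (hi : i ≠ j) : w i = 0 := by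
  refine le_antisymm ?_ hwi
  rcases Nat.eq_zero_or_pos i with rfl | hi_pos
  · linarith [hlam 1 le_rfl (by omega) (by omega)]
  rcases hiM.lt_or_eq with hiM | rfl
  · linarith [hmid i hi_pos hiM, hlam i hi_pos hiM.le hi, hlam (i + 1) (by omega) hiM (by omega)]
  · linarith [hlam i hi_pos le_rfl hi]

lemma convex_combination_mem_Icc {a b x y : 𝕜} (ha : 0 ≤ a) (hb : 0 ≤ b) (hab : a + b = 1)
    (hxy : x ≤ y) : a * x + b * y ∈ Set.Icc x y := by
  simpa only [smul_eq_mul] using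
    convex_Icc x y (Set.left_mem_Icc.2 hxy) (Set.right_mem_Icc.2 hxy) ha hb hab

end

lemma convex_combination_eq_interpolant {𝕜 : Type*} [Field 𝕜] {a b x y u v : 𝕜}
    (hab : a + b = 1) (hxy : x ≠ y) : a * u + b * v = u + (v - u) * (a * x + b * y - x) / (y - x) := by
  have hyx : y - x ≠ 0 := sub_ne_zero.2 hxy.symm
  rw [eq_sub_of_add_eq hab]
  field_simp
  ring

theorem sos2_encoding_correct_general (M : ℕ) (R : ℕ → ℝ)
    (hRmono : ∀ i j, i < j → j ≤ M → R i < R j) (k : ℝ → ℝ)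
    (w : ℕ → ℝ) (hw : ∀ j ≤ M, 0 ≤ w j)
    (hwsum : ∑ j ∈ Finset.range (M + 1), w j = 1)
    (lam : ℕ → ℝ) (hlam01 : ∀ j, 1 ≤ j → j ≤ M → lam j = 0 ∨ lam j = 1)
    (hlamsum : ∑ j ∈ Finset.Icc 1 M, lam j = 1)
    (h0 : w 0 ≤ lam 1)
    (hmid : ∀ j, 1 ≤ j → j < M → w j ≤ lam j + lam (j + 1))
    (hlast : w M ≤ lam M) :
    ∃ j, 1 ≤ j ∧ j ≤ M ∧
      (∑ i ∈ Finset.range (M + 1), w i * R i) ∈ Set.Icc (R (j - 1)) (R j) ∧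
      (∑ i ∈ Finset.range (M + 1), w i * k (R i)) =
        k (R (j - 1)) + (k (R j) - k (R (j - 1))) *
          ((∑ i ∈ Finset.range (M + 1), w i * R i) - R (j - 1)) / (R j - R (j - 1)) := by
  obtain ⟨j, hj, hlam⟩ := exists_eq_one_of_sum_eq_one
    (fun i hi => hlam01 i (mem_Icc.1 hi).1 (mem_Icc.1 hi).2) hlamsum
  obtain ⟨hj1, hjM⟩ := mem_Icc.1 hj
  have hsum (f : ℕ → ℝ) :
      ∑ i ∈ range (M + 1), w i * f i = w (j - 1) * f (j - 1) + w j * f j :=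
    sum_eq_add_of_mem _ _ (mem_range.2 (by omega)) (mem_range.2 (by omega)) (by omega)
      fun i hi ⟨hi_pred, hi_j⟩ => by
        have hiM : i ≤ M := Nat.lt_succ_iff.1 (mem_range.1 hi)
        rw [sos2_weight_eq_zero hj1 hjM (fun i hi hiM => hlam i (mem_Icc.2 ⟨hi, hiM⟩))
          (hw i hiM) h0 hmid hlast hiM hi_pred hi_j, zero_mul]
  have hab : w (j - 1) + w j = 1 := by
    simpa only [mul_one, hwsum, eq_comm] using hsum fun _ => 1
  have hR : R (j - 1) < R j := hRmono _ _ (by omega) hjM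
  refine ⟨j, hj1, hjM, ?_, ?_⟩
  · rw [hsum R]
    exact convex_combination_mem_Icc (hw _ (by omega)) (hw _ hjM) hab hR.le
  · rw [hsum R, hsum fun i => k (R i)]
    exact convex_combination_eq_interpolant hab hR.ne

theorem sos2_encoding_correct (M : ℕ) (hM : 0 < M) (R : ℕ → ℝ) (hR0 : R 0 = 0)
    (hRmono : ∀ i j, i < j → j ≤ M → R i < R j) (k : ℝ → ℝ)
    (w : ℕ → ℝ) (hw : ∀ j ≤ M, 0 ≤ w j)
    (hwsum : ∑ j ∈ Finset.range (M + 1), w j = 1)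
    (lam : ℕ → ℝ) (hlam01 : ∀ j, 1 ≤ j → j ≤ M → lam j = 0 ∨ lam j = 1)
    (hlamsum : ∑ j ∈ Finset.Icc 1 M, lam j = 1)
    (h0 : w 0 ≤ lam 1)
    (hmid : ∀ j, 1 ≤ j → j < M → w j ≤ lam j + lam (j + 1))
    (hlast : w M ≤ lam M) :
    ∃ j, 1 ≤ j ∧ j ≤ M ∧
      (∑ i ∈ Finset.range (M + 1), w i * R i) ∈ Set.Icc (R (j - 1)) (R j) ∧
      (∑ i ∈ Finset.range (M + 1), w i * k (R i)) =
        k (R (j - 1)) + (k (R j) - k (R (j - 1))) *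
          ((∑ i ∈ Finset.range (M + 1), w i * R i) - R (j - 1)) / (R j - R (j - 1)) :=
  sos2_encoding_correct_general M R hRmono k w hw hwsum lam hlam01 hlamsum h0 hmid hlast
end
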